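/- arXiv:1311.4989 — 2 statements merged into one kernel-verified Lean document; each statement's English description precedes it below -/
import Mathlib

section
/- Let Ω ⊆ ℝⁿ be closed and r > 0. Then Ω is r-convex if and only if Ω is σ-regular for σ = 1/(2r). -/
open Filter Metric Set
open scoped Topology RealInnerProductSpace NNReal

/-- A set `Ω` is `r`-convex if for all `x, y ∈ Ω` the intersection of all closed balls of
radius `r` containing both `x` and `y` (taken to be everything if no such ball exists)
is contained in `Ω`. -/
def RConvex {n : ℕ} (r : ℝ) (Ω : Set (EuclideanSpace ℝ (Fin n))) : Prop :=
  ∀ x ∈ Ω, ∀ y ∈ Ω,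
    {z : EuclideanSpace ℝ (Fin n) |
      ∀ c : EuclideanSpace ℝ (Fin n),
        x ∈ closedBall c r → y ∈ closedBall c r → z ∈ closedBall c r} ⊆ Ω

/-- A set `Ω` is `σ`-regular if for all `x, y ∈ Ω` and `α ∈ (0,1)`, the closed ball centered
at `α x + (1-α) y` of radius `σ α (1-α) ‖x-y‖²` is contained in `Ω`. -/
def SigmaRegular {n : ℕ} (σ : ℝ) (Ω : Set (EuclideanSpace ℝ (Fin n))) : Prop :=
  ∀ x ∈ Ω, ∀ y ∈ Ω, ∀ α ∈ Set.Ioo (0:ℝ) 1,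
    closedBall (α • x + (1 - α) • y) (σ * α * (1 - α) * ‖x - y‖ ^ 2) ⊆ Ω

/-! If `x, y` lie in a closed ball `B(c, r)` and `m = α x + (1 - α) y`, then
`‖m - c‖² = α ‖x - c‖² + (1 - α) ‖y - c‖² - d` with `d = α (1 - α) ‖x - y‖²`, so
`‖m - c‖ ≤ √(r² - d) ≤ r - d / (2r)` and the regularity ball of radius `d / (2r)` around `m`
stays inside `B(c, r)`: r-convex sets are `1/(2r)`-regular.

Conversely, let `z` lie in the r-spindle of `x, y ∈ Ω` but outside the closed set `Ω`, and let
`w` be a point of `T = Ω ∩ spindle` nearest to `z`. As an intersection of regular sets, `T` is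
regular, so for every `p ∈ T` the regularity balls between `w` and `p` avoid the open ball
`B(z, ‖z - w‖)`. Letting their centres tend to `w` puts `p` inside the ball of radius `r`
tangent at `w` to `B(z, ‖z - w‖)` on the far side from `z`. That ball then contains `x` and `y`,
hence `z`, whose distance to its centre is `r + ‖z - w‖`. -/

lemma nonpos_of_forall_le_mul {a b : ℝ} (h : ∀ t ∈ Ioo (0:ℝ) 1, a ≤ t * b) : a ≤ 0 := by
  have hlim : Tendsto (fun t : ℝ => t * b) (𝓝[>] 0) (𝓝 0) :=
    ((continuous_mul_const b).tendsto' 0 0 (zero_mul b)).mono_left nhdsWithin_le_nhds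
  exact ge_of_tendsto hlim (eventually_of_mem (Ioo_mem_nhdsGT one_pos) h)

lemma le_sub_div_of_sq_le_sub {M r d : ℝ} (hr : 0 < r) (hM : 0 ≤ M) (h : M ^ 2 ≤ r ^ 2 - d) :
    M ≤ r - d / (2 * r) := by
  have hs : 0 ≤ r - d / (2 * r) := by
    rw [sub_nonneg, div_le_iff₀ (by positivity)]
    nlinarith
  rw [← sq_le_sq₀ hM hs]
  have : (r - d / (2 * r)) ^ 2 = r ^ 2 - d + (d / (2 * r)) ^ 2 := by field_simp; ring
  nlinarith [sq_nonneg (d / (2 * r))]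

section InnerProductSpace

variable {E : Type*} [NormedAddCommGroup E] [InnerProductSpace ℝ E]

lemma norm_smul_add_one_sub_smul_sq (a b : E) (α : ℝ) :
    ‖α • a + (1 - α) • b‖ ^ 2
      = α * ‖a‖ ^ 2 + (1 - α) * ‖b‖ ^ 2 - α * (1 - α) * ‖a - b‖ ^ 2 := by
  simp only [← real_inner_self_eq_norm_sq, inner_add_add_self, inner_sub_sub_self,
    real_inner_smul_left, real_inner_smul_right, real_inner_comm a b]
  ring

lemma closedBall_smul_add_one_sub_smul_subset {r α : ℝ} (hr : 0 < r) (hα : α ∈ Icc (0:ℝ) 1)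
    {x y c : E} (hx : x ∈ closedBall c r) (hy : y ∈ closedBall c r) :
    closedBall (α • x + (1 - α) • y) (1 / (2 * r) * α * (1 - α) * ‖x - y‖ ^ 2)
      ⊆ closedBall c r := by
  obtain ⟨hα0, hα1⟩ := hα
  rw [mem_closedBall_iff_norm] at hx hy
  have hm : ‖α • x + (1 - α) • y - c‖ ^ 2
      = α * ‖x - c‖ ^ 2 + (1 - α) * ‖y - c‖ ^ 2 - α * (1 - α) * ‖x - y‖ ^ 2 := by
    rw [← sub_sub_sub_cancel_right x y c, ← norm_smul_add_one_sub_smul_sq]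
    congr 2
    module
  have hmc : ‖α • x + (1 - α) • y - c‖ ^ 2 ≤ r ^ 2 - α * (1 - α) * ‖x - y‖ ^ 2 := by
    have hx2 : ‖x - c‖ ^ 2 ≤ r ^ 2 := pow_le_pow_left₀ (norm_nonneg _) hx 2
    have hy2 : ‖y - c‖ ^ 2 ≤ r ^ 2 := pow_le_pow_left₀ (norm_nonneg _) hy 2
    nlinarith [mul_le_mul_of_nonneg_left hx2 hα0, mul_le_mul_of_nonneg_left hy2 (sub_nonneg.2 hα1)]
  refine closedBall_subset_closedBall' ?_
  rw [dist_eq_norm]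
  have := le_sub_div_of_sq_le_sub hr (norm_nonneg _) hmc
  have e : 1 / (2 * r) * α * (1 - α) * ‖x - y‖ ^ 2 = α * (1 - α) * ‖x - y‖ ^ 2 / (2 * r) := by ring
  linarith

lemma dist_sub_div_dist_smul_sub {r : ℝ} (hr : 0 ≤ r) {z w : E} (hzw : z ≠ w) :
    dist z (w - (r / dist z w) • (z - w)) = dist z w + r := by
  have hD : 0 < dist z w := dist_pos.2 hzw
  rw [dist_eq_norm, show z - (w - (r / dist z w) • (z - w)) = (1 + r / dist z w) • (z - w) by
    module, norm_smul, ← dist_eq_norm, Real.norm_of_nonneg (by positivity)]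
  field_simp

lemma mem_closedBall_of_forall_disjoint {r : ℝ} (hr : 0 < r) {z w p : E} (hzw : z ≠ w)
    (h : ∀ t ∈ Ioo (0:ℝ) 1, Disjoint
      (closedBall (t • p + (1 - t) • w) (1 / (2 * r) * t * (1 - t) * ‖p - w‖ ^ 2))
      (ball z (dist z w))) :
    p ∈ closedBall (w - (r / dist z w) • (z - w)) r := by
  set D := dist z w
  have hD : 0 < D := dist_pos.2 hzw
  set L := ‖p - w‖ ^ 2
  set γ := ⟪z - w, p - w⟫
  have key : D * L + 2 * r * γ ≤ 0 := by
    refine nonpos_of_forall_le_mul (b := (D + r) * L) fun t ht => ?_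
    obtain ⟨ht0, ht1⟩ := ht
    set ρ := 1 / (2 * r) * t * (1 - t) * L with hρ_def
    have hρ : 0 ≤ ρ := by
      have : 0 ≤ 1 - t := by linarith
      positivity
    have hsep := (disjoint_closedBall_ball_iff hρ hD).1 (h t ⟨ht0, ht1⟩)
    have hdist : dist (t • p + (1 - t) • w) z ^ 2 = D ^ 2 - 2 * t * γ + t ^ 2 * L := by
      rw [dist_eq_norm, show t • p + (1 - t) • w - z = t • (p - w) - (z - w) by module,
        norm_sub_sq_real, real_inner_smul_left, norm_smul, Real.norm_of_nonneg ht0.le,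
        ← dist_eq_norm z w, real_inner_comm]
      ring
    have hsq := pow_le_pow_left₀ (by positivity) hsep 2
    rw [hdist] at hsq
    have h1 : t * (D * (1 - t) * L / r) ≤ t * (t * L - 2 * γ) := by
      have : 2 * D * ρ = t * (D * (1 - t) * L / r) := by rw [hρ_def]; field_simp
      nlinarith [sq_nonneg ρ]
    have h2 := (div_le_iff₀ hr).1 (le_of_mul_le_mul_left h1 ht0)
    linarith
  have hpc : ‖p - (w - (r / D) • (z - w))‖ ^ 2 = r ^ 2 + (D * L + 2 * r * γ) / D := by
    rw [show p - (w - (r / D) • (z - w)) = (p - w) + (r / D) • (z - w) by abel,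
      norm_add_sq_real, real_inner_smul_right, norm_smul, Real.norm_of_nonneg (by positivity),
      ← dist_eq_norm z w, real_inner_comm]
    field_simp
    ring
  rw [mem_closedBall_iff_norm, ← sq_le_sq₀ (norm_nonneg _) hr.le, hpc]
  linarith [div_nonpos_of_nonpos_of_nonneg key hD.le]

end InnerProductSpace

section Spindle

variable {X : Type*} [PseudoMetricSpace X]

def spindle (r : ℝ) (x y : X) : Set X :=
  {z | ∀ c, x ∈ closedBall c r → y ∈ closedBall c r → z ∈ closedBall c r}

lemma left_mem_spindle (r : ℝ) (x y : X) : x ∈ spindle r x y :=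
  fun _ hx _ => hx

lemma right_mem_spindle (r : ℝ) (x y : X) : y ∈ spindle r x y :=
  fun _ _ hy => hy

lemma isClosed_spindle (r : ℝ) (x y : X) : IsClosed (spindle r x y) := by
  have : spindle r x y = ⋂ c ∈ {c | x ∈ closedBall c r ∧ y ∈ closedBall c r}, closedBall c r := by
    ext z
    simp only [spindle, mem_ofPred_eq, mem_iInter, and_imp]
  rw [this]
  exact isClosed_biInter fun _ _ => isClosed_closedBall

end Spindle

section EuclideanSpace

variable {n : ℕ}

lemma rConvex_spindle (r : ℝ) (x y : EuclideanSpace ℝ (Fin n)) : RConvex r (spindle r x y) :=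
  fun _ hp _ hq _ hz c hx hy => hz c (hp c hx hy) (hq c hx hy)

lemma RConvex.sigmaRegular {r : ℝ} (hr : 0 < r) {Ω : Set (EuclideanSpace ℝ (Fin n))}
    (h : RConvex r Ω) : SigmaRegular (1 / (2 * r)) Ω :=
  fun x hx y hy _ hα _ hz => h x hx y hy fun _ hxc hyc =>
    closedBall_smul_add_one_sub_smul_subset hr (Ioo_subset_Icc_self hα) hxc hyc hz

lemma SigmaRegular.inter {σ : ℝ} {S T : Set (EuclideanSpace ℝ (Fin n))}
    (hS : SigmaRegular σ S) (hT : SigmaRegular σ T) : SigmaRegular σ (S ∩ T) :=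
  fun x hx y hy α hα => subset_inter (hS x hx.1 y hy.1 α hα) (hT x hx.2 y hy.2 α hα)

lemma SigmaRegular.subset_closedBall_of_forall_dist_le {r : ℝ} (hr : 0 < r)
    {T : Set (EuclideanSpace ℝ (Fin n))} (hT : SigmaRegular (1 / (2 * r)) T)
    {z w : EuclideanSpace ℝ (Fin n)} (hw : w ∈ T) (hzw : z ≠ w)
    (hmin : ∀ q ∈ T, dist z w ≤ dist z q) :
    T ⊆ closedBall (w - (r / dist z w) • (z - w)) r := by
  refine fun p hp => mem_closedBall_of_forall_disjoint hr hzw fun t ht => ?_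
  refine Set.disjoint_left.2 fun q hq hqz => ?_
  exact (hmin q (hT p hp w hw t ht hq)).not_gt (mem_ball'.1 hqz)

end EuclideanSpace

/-- Lemma 8: a closed set `Ω ⊆ ℝⁿ` is `r`-convex if and only if it is `1/(2r)`-regular. -/
theorem rConvex_iff_sigmaRegular {n : ℕ} (Ω : Set (EuclideanSpace ℝ (Fin n)))
    (hΩ : IsClosed Ω) (r : ℝ) (hr : 0 < r) :
    RConvex r Ω ↔ SigmaRegular (1 / (2 * r)) Ω := by
  refine ⟨RConvex.sigmaRegular hr, fun hreg x hx y hy z hz => ?_⟩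
  by_contra hzΩ
  set T := Ω ∩ spindle r x y
  have hxT : x ∈ T := ⟨hx, left_mem_spindle r x y⟩
  have hyT : y ∈ T := ⟨hy, right_mem_spindle r x y⟩
  obtain ⟨w, hwT, hw⟩ := (hΩ.inter (isClosed_spindle r x y)).exists_infDist_eq_dist ⟨x, hxT⟩ z
  have hzw : z ≠ w := fun h => hzΩ (h ▸ hwT.1)
  have hsub : T ⊆ closedBall (w - (r / dist z w) • (z - w)) r :=
    (hreg.inter ((rConvex_spindle r x y).sigmaRegular hr)).subset_closedBall_of_forall_dist_le hr
      hwT hzw fun q hq => hw ▸ infDist_le_dist_of_mem hq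
  have hzc := mem_closedBall.1 (hz _ (hsub hxT) (hsub hyT))
  rw [dist_sub_div_dist_smul_sub hr.le hzw] at hzc
  linarith [dist_pos.2 hzw]
end

section
/- Let m ∈ ℕ, U ⊆ ℝⁿ open and convex, f₁, …, f_m : U → ℝ of class C^{1,1}, and define f : U → ℝ by f(x) = max_{i ∈ {1,…,m}} f_i(x). For x ∈ U and h ∈ ℝⁿ, set I(x) = {i ∈ {1,…,m} | f_i(x) = f(x)} and M = argmax_{i ∈ I(x)} f_i'(x)h. Then for all x ∈ U and h ∈ ℝⁿ: D̄²f(x, h²) ≥ max_{i ∈ M} D̲²f_i(x, h²). -/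
open Filter Metric Set
open scoped Topology RealInnerProductSpace NNReal

/-- The one-sided directional derivative `φ'(x; h) = lim_{t→0⁺} (φ(x + t h) - φ(x))/t`
(an arbitrary value if the limit does not exist). -/
noncomputable def posDirDeriv {n : ℕ} (φ : EuclideanSpace ℝ (Fin n) → ℝ)
    (x h : EuclideanSpace ℝ (Fin n)) : ℝ :=
  limUnder (𝓝[>] (0:ℝ)) (fun t : ℝ => (φ (x + t • h) - φ x) / t)

/-- The upper generalized second-order directional derivative
`D̄²φ(x, h²) = limsup_{t→0⁺} (φ'(x + t h; h) - φ'(x; h))/t`. -/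
noncomputable def upperD2 {n : ℕ} (φ : EuclideanSpace ℝ (Fin n) → ℝ)
    (x h : EuclideanSpace ℝ (Fin n)) : ℝ :=
  limsup (fun t : ℝ => (posDirDeriv φ (x + t • h) h - posDirDeriv φ x h) / t) (𝓝[>] (0:ℝ))

/-- The lower generalized second-order directional derivative
`D̲²φ(x, h²) = liminf_{t→0⁺} (φ'(x + t h; h) - φ'(x; h))/t`. -/
noncomputable def lowerD2 {n : ℕ} (φ : EuclideanSpace ℝ (Fin n) → ℝ)
    (x h : EuclideanSpace ℝ (Fin n)) : ℝ :=
  liminf (fun t : ℝ => (posDirDeriv φ (x + t • h) h - posDirDeriv φ x h) / t) (𝓝[>] (0:ℝ))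

/-!
Along the ray `s ↦ x + s • h` the gap `ψ s = f (x + s • h) - fᵢ (x + s • h)` is nonnegative,
vanishes at `0`, and has right derivative `f'(x + s h; h) - fᵢ'(x + s h) h` (Danskin's formula
for a finite maximum). If this right derivative were negative on some `(0, ε)`, the gap would
decrease there and hence vanish, which is absurd; so arbitrarily close to `0` we have
`fᵢ'(x + s h) h ≤ f'(x + s h; h)`. As `f'(x; h) = fᵢ'(x) h` for the maximizing index `i`, the
second-order quotient of `fᵢ` is frequently below that of `f`. The Lipschitz constants of the
`fⱼ'` bound the first from below and the second from above, so `liminf ≤ limsup`.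
-/

lemma exists_mem_Ioo_deriv_right_nonneg {ψ ψ' : ℝ → ℝ} {ε : ℝ} (hε : 0 < ε)
    (hcont : ContinuousOn ψ (Ico 0 ε))
    (hderiv : ∀ t ∈ Ioo 0 ε, HasDerivWithinAt ψ (ψ' t) (Ioi t) t)
    (h0 : ψ 0 = 0) (hnonneg : ∀ t ∈ Ioo 0 ε, 0 ≤ ψ t) :
    ∃ t ∈ Ioo 0 ε, 0 ≤ ψ' t := by
  by_contra! hneg
  have hanti : ∀ a b, 0 < a → a ≤ b → b < ε → ψ b ≤ ψ a := fun a b ha hab hbε =>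
    image_le_of_deriv_right_le_deriv_boundary (B := fun _ => ψ a) (B' := fun _ => 0)
      (hcont.mono (Icc_subset_Ico ha.le hbε))
      (fun s hs => (hderiv s ⟨ha.trans_le hs.1, hs.2.trans hbε⟩).Ici_of_Ioi) le_rfl
      continuousOn_const (fun _ _ => hasDerivWithinAt_const _ _ _)
      (fun s hs => (hneg s ⟨ha.trans_le hs.1, hs.2.trans hbε⟩).le) ⟨hab, le_rfl⟩
  have hnonpos : ∀ b ∈ Ioo 0 ε, ψ b ≤ 0 := by
    intro b hb
    have hlim : Tendsto ψ (𝓝[>] 0) (𝓝 (ψ 0)) :=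
      ((hcont 0 ⟨le_rfl, hε⟩).mono Ioo_subset_Ico_self).tendsto.mono_left
        (nhdsWithin_Ioo_eq_nhdsGT hε).ge
    rw [← h0]
    refine ge_of_tendsto hlim ?_
    filter_upwards [Ioo_mem_nhdsGT hb.1] with a ha using hanti a b ha.1 ha.2.le hb.2
  obtain ⟨t, ht⟩ : (Ioo 0 ε).Nonempty := nonempty_Ioo.2 hε
  have hslope : Tendsto (slope ψ t) (𝓝[>] t) (𝓝 (ψ' t)) :=
    (hasDerivWithinAt_iff_tendsto_slope' (lt_irrefl t)).1 (hderiv t ht)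
  obtain ⟨z, hz, hzε⟩ :=
    ((hslope.eventually (eventually_lt_nhds (hneg t ht))).and (Ioo_mem_nhdsGT ht.2)).exists
  rw [slope_def_field, div_lt_iff₀ (sub_pos.2 hzε.1), zero_mul] at hz
  linarith [hnonneg z ⟨ht.1.trans hzε.1, hzε.2⟩, hnonpos t ht]

section FiniteMax

variable {ι X : Type*} [Finite ι] {f : ι → X → ℝ}

lemma le_iSup_apply_of_finite (y : X) (i : ι) : f i y ≤ ⨆ j, f j y :=
  le_ciSup (Set.finite_range fun j => f j y).bddAbove i

variable [TopologicalSpace X] {x : X}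

lemma continuousAt_iSup_apply [Nonempty ι] (hf : ∀ i, ContinuousAt (f i) x) :
    ContinuousAt (fun y => ⨆ i, f i y) x := by
  have := Fintype.ofFinite ι
  simp_rw [← Finset.sup'_univ_eq_ciSup]
  exact ContinuousAt.finset_sup'_apply _ fun i _ => hf i

lemma eventually_active_imp_active (hf : ∀ i, ContinuousAt (f i) x) :
    ∀ᶠ y in 𝓝 x, ∀ i, f i y = ⨆ j, f j y → f i x = ⨆ j, f j x := by
  refine eventually_all.2 fun i => ?_
  by_cases hi : f i x = ⨆ j, f j x
  · exact Eventually.of_forall fun _ _ => hi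
  have : Nonempty ι := ⟨i⟩
  filter_upwards [(hf i).eventually_lt (continuousAt_iSup_apply hf)
    ((le_iSup_apply_of_finite x i).lt_of_ne hi)] with y hy hyi
  exact absurd hyi hy.ne

end FiniteMax

section DirectionalSlope

variable {E : Type*} [NormedAddCommGroup E] [NormedSpace ℝ E]

lemma tendsto_add_smul_nhds_zero (y h : E) : Tendsto (fun t : ℝ => y + t • h) (𝓝 0) (𝓝 y) :=
  (continuous_const.add (continuous_id.smul continuous_const)).tendsto' 0 y (by simp)

lemma eventually_add_smul_mem {U : Set E} (hU : IsOpen U) {x : E} (hx : x ∈ U) (h : E) :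
    ∀ᶠ t : ℝ in 𝓝 0, x + t • h ∈ U :=
  (tendsto_add_smul_nhds_zero x h).eventually (hU.mem_nhds hx)

lemma hasDerivWithinAt_Ioi_comp_add_smul {g : E → ℝ} {x h : E} {t L : ℝ}
    (hg : Tendsto (fun u : ℝ => (g (x + t • h + u • h) - g (x + t • h)) / u) (𝓝[>] 0) (𝓝 L)) :
    HasDerivWithinAt (fun s : ℝ => g (x + s • h)) L (Ioi t) t := by
  rw [hasDerivWithinAt_iff_tendsto_slope' self_notMem_Ioi, ← add_zero t, ← map_add_left_nhdsGT,
    add_zero, tendsto_map'_iff]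
  refine hg.congr fun u => ?_
  simp only [Function.comp_apply, slope_def_field, add_sub_cancel_left, add_smul, add_assoc]

lemma DifferentiableAt.tendsto_slope_dir {φ : E → ℝ} {y : E} (hφ : DifferentiableAt ℝ φ y)
    (h : E) :
    Tendsto (fun t : ℝ => (φ (y + t • h) - φ y) / t) (𝓝[>] 0) (𝓝 (fderiv ℝ φ y h)) := by
  simpa only [smul_eq_mul, div_eq_inv_mul] using
    hφ.hasFDerivAt.hasLineDerivAt h |>.tendsto_slope_zero_right

variable {ι : Type*} [Finite ι] {f : ι → E → ℝ} {y h : E}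

lemma tendsto_slope_dir_iSup (hf : ∀ i, DifferentiableAt ℝ (f i) y) {j : ι}
    (hj : f j y = ⨆ i, f i y)
    (hjmax : ∀ i, f i y = ⨆ k, f k y → fderiv ℝ (f i) y h ≤ fderiv ℝ (f j) y h) :
    Tendsto (fun t : ℝ => ((⨆ i, f i (y + t • h)) - ⨆ i, f i y) / t) (𝓝[>] 0)
      (𝓝 (fderiv ℝ (f j) y h)) := by
  have hslope (i : ι) := (hf i).tendsto_slope_dir h
  refine tendsto_order.2 ⟨fun a ha => ?_, fun b hb => ?_⟩
  · filter_upwards [(hslope j).eventually (eventually_gt_nhds ha), self_mem_nhdsWithin]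
      with t hlt (ht : 0 < t)
    refine hlt.trans_le (div_le_div_of_nonneg_right ?_ ht.le)
    rw [← hj]
    exact sub_le_sub_right (le_iSup_apply_of_finite _ j) _
  · have hactive := (tendsto_add_smul_nhds_zero y h).eventually
      (eventually_active_imp_active fun i => (hf i).continuousAt)
    have hlt : ∀ᶠ t in 𝓝[>] (0 : ℝ), ∀ i, f i y = ⨆ k, f k y →
        (f i (y + t • h) - f i y) / t < b := by
      refine eventually_all.2 fun i => ?_
      by_cases hi : f i y = ⨆ k, f k y
      · filter_upwards [(hslope i).eventually (eventually_lt_nhds ((hjmax i hi).trans_lt hb))]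
          with t ht using fun _ => ht
      · exact Eventually.of_forall fun _ hi' => absurd hi' hi
    have : Nonempty ι := ⟨j⟩
    filter_upwards [nhdsWithin_le_nhds hactive, hlt] with t hta htb
    obtain ⟨i, hi⟩ := exists_eq_ciSup_of_finite (f := fun k => f k (y + t • h))
    rw [← hi, ← hta i hi]
    exact htb i (hta i hi)

lemma exists_tendsto_slope_dir_iSup [Nonempty ι] (hf : ∀ i, DifferentiableAt ℝ (f i) y) :
    ∃ j, f j y = ⨆ i, f i y ∧
      Tendsto (fun t : ℝ => ((⨆ i, f i (y + t • h)) - ⨆ i, f i y) / t) (𝓝[>] 0)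
        (𝓝 (fderiv ℝ (f j) y h)) := by
  obtain ⟨j, hj, hjmax⟩ := Set.exists_max_image {i | f i y = ⨆ k, f k y}
    (fun i => fderiv ℝ (f i) y h) (Set.toFinite _) exists_eq_ciSup_of_finite
  exact ⟨j, hj, tendsto_slope_dir_iSup hf hj hjmax⟩

end DirectionalSlope

lemma LipschitzOnWith.norm_apply_add_smul_sub_le {E F : Type*} [NormedAddCommGroup E]
    [NormedSpace ℝ E] [NormedAddCommGroup F] [NormedSpace ℝ F] {g : E → E →L[ℝ] F} {K : ℝ≥0}
    {U : Set E} (hg : LipschitzOnWith K g U) {x h : E} {t : ℝ} (ht : 0 ≤ t) (hx : x ∈ U)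
    (hxt : x + t • h ∈ U) : ‖g (x + t • h) h - g x h‖ ≤ K * ‖h‖ ^ 2 * t :=
  calc ‖g (x + t • h) h - g x h‖ = ‖(g (x + t • h) - g x) h‖ := rfl
    _ ≤ ‖g (x + t • h) - g x‖ * ‖h‖ := (g (x + t • h) - g x).le_opNorm h
    _ ≤ K * dist (x + t • h) x * ‖h‖ := by
      gcongr
      rw [← dist_eq_norm]
      exact hg.dist_le_mul _ hxt _ hx
    _ = K * ‖h‖ ^ 2 * t := by
      rw [dist_eq_norm, add_sub_cancel_left, norm_smul, Real.norm_of_nonneg ht]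
      ring

section SecondOrder

variable {n : ℕ}

noncomputable def secondDirQuot (φ : EuclideanSpace ℝ (Fin n) → ℝ)
    (x h : EuclideanSpace ℝ (Fin n)) (t : ℝ) : ℝ :=
  (posDirDeriv φ (x + t • h) h - posDirDeriv φ x h) / t

lemma posDirDeriv_eq_of_tendsto {φ : EuclideanSpace ℝ (Fin n) → ℝ}
    {y h : EuclideanSpace ℝ (Fin n)} {L : ℝ}
    (hL : Tendsto (fun t : ℝ => (φ (y + t • h) - φ y) / t) (𝓝[>] 0) (𝓝 L)) :
    posDirDeriv φ y h = L :=
  hL.limUnder_eq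

lemma DifferentiableAt.posDirDeriv_eq {φ : EuclideanSpace ℝ (Fin n) → ℝ}
    {y : EuclideanSpace ℝ (Fin n)} (hφ : DifferentiableAt ℝ φ y) (h : EuclideanSpace ℝ (Fin n)) :
    posDirDeriv φ y h = fderiv ℝ φ y h :=
  posDirDeriv_eq_of_tendsto (hφ.tendsto_slope_dir h)

variable {U : Set (EuclideanSpace ℝ (Fin n))} {x h : EuclideanSpace ℝ (Fin n)}

lemma eventually_neg_le_secondDirQuot (hU : IsOpen U) {φ : EuclideanSpace ℝ (Fin n) → ℝ}
    {K : ℝ≥0} (hφ : ∀ y ∈ U, DifferentiableAt ℝ φ y) (hK : LipschitzOnWith K (fderiv ℝ φ) U)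
    (hx : x ∈ U) : ∀ᶠ t in 𝓝[>] 0, -(K * ‖h‖ ^ 2) ≤ secondDirQuot φ x h t := by
  filter_upwards [(eventually_add_smul_mem hU hx h).filter_mono nhdsWithin_le_nhds,
    self_mem_nhdsWithin] with t hxt (ht : 0 < t)
  have hbound := hK.norm_apply_add_smul_sub_le (h := h) ht.le hx hxt
  rw [Real.norm_eq_abs, abs_le] at hbound
  rw [secondDirQuot, (hφ _ hxt).posDirDeriv_eq, (hφ x hx).posDirDeriv_eq, le_div_iff₀ ht]
  linarith [hbound.1]

variable {ι : Type*} [Finite ι] {f : ι → EuclideanSpace ℝ (Fin n) → ℝ}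

lemma tendsto_slope_dir_posDirDeriv_iSup [Nonempty ι] {y : EuclideanSpace ℝ (Fin n)}
    (hf : ∀ i, DifferentiableAt ℝ (f i) y) :
    Tendsto (fun t : ℝ => ((⨆ i, f i (y + t • h)) - ⨆ i, f i y) / t) (𝓝[>] 0)
      (𝓝 (posDirDeriv (fun z => ⨆ i, f i z) y h)) := by
  obtain ⟨j, -, hj⟩ := exists_tendsto_slope_dir_iSup (h := h) hf
  rwa [posDirDeriv_eq_of_tendsto (φ := fun z => ⨆ i, f i z) hj]

lemma posDirDeriv_iSup_eq {y : EuclideanSpace ℝ (Fin n)} (hf : ∀ j, DifferentiableAt ℝ (f j) y)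
    {i : ι} (hi : f i y = ⨆ j, f j y)
    (himax : ∀ j, f j y = ⨆ k, f k y → fderiv ℝ (f j) y h ≤ fderiv ℝ (f i) y h) :
    posDirDeriv (fun z => ⨆ j, f j z) y h = fderiv ℝ (f i) y h :=
  posDirDeriv_eq_of_tendsto (φ := fun z => ⨆ j, f j z) (tendsto_slope_dir_iSup hf hi himax)

variable (hU : IsOpen U) (hfd : ∀ j, ∀ y ∈ U, DifferentiableAt ℝ (f j) y) (hx : x ∈ U)
  {i : ι} (hi : f i x = ⨆ j, f j x)
include hU hfd hx hi

lemma eventually_secondDirQuot_iSup_le {K : ℝ≥0}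
    (hK : ∀ j, LipschitzOnWith K (fderiv ℝ (f j)) U)
    (himax : ∀ j, f j x = ⨆ k, f k x → fderiv ℝ (f j) x h ≤ fderiv ℝ (f i) x h) :
    ∀ᶠ t in 𝓝[>] 0, secondDirQuot (fun y => ⨆ j, f j y) x h t ≤ K * ‖h‖ ^ 2 := by
  have : Nonempty ι := ⟨i⟩
  filter_upwards [nhdsWithin_le_nhds (eventually_add_smul_mem hU hx h),
    nhdsWithin_le_nhds ((tendsto_add_smul_nhds_zero x h).eventually
      (eventually_active_imp_active fun j => (hfd j x hx).continuousAt)),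
    self_mem_nhdsWithin] with t hxt hactive (ht : 0 < t)
  obtain ⟨j, hj, hjlim⟩ := exists_tendsto_slope_dir_iSup (h := h) fun k => hfd k _ hxt
  have hbound := (hK j).norm_apply_add_smul_sub_le (h := h) ht.le hx hxt
  rw [Real.norm_eq_abs, abs_le] at hbound
  rw [secondDirQuot, posDirDeriv_eq_of_tendsto (φ := fun y => ⨆ j, f j y) hjlim,
    posDirDeriv_iSup_eq (fun k => hfd k x hx) hi himax, div_le_iff₀ ht]
  linarith [hbound.2, himax j (hactive j hj)]

lemma frequently_fderiv_le_posDirDeriv_iSup :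
    ∃ᶠ t : ℝ in 𝓝[>] 0,
      fderiv ℝ (f i) (x + t • h) h ≤ posDirDeriv (fun y => ⨆ j, f j y) (x + t • h) h := by
  have : Nonempty ι := ⟨i⟩
  obtain ⟨ε₀, hε₀, hseg⟩ := (nhdsGE_basis (0 : ℝ)).eventually_iff.1
    (nhdsWithin_le_nhds (eventually_add_smul_mem hU hx h))
  rw [(nhdsGT_basis (0 : ℝ)).frequently_iff]
  intro ε hε
  have hsegε : ∀ s ∈ Ico 0 (min ε ε₀), x + s • h ∈ U :=
    fun s hs => hseg ⟨hs.1, hs.2.trans_le (min_le_right _ _)⟩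
  obtain ⟨t, ht, hderiv⟩ := exists_mem_Ioo_deriv_right_nonneg (lt_min hε hε₀)
    (ψ := fun s => (⨆ j, f j (x + s • h)) - f i (x + s • h))
    (ψ' := fun s => posDirDeriv (fun y => ⨆ j, f j y) (x + s • h) h
      - fderiv ℝ (f i) (x + s • h) h)
    (fun s hs => by
      have hy := hsegε s hs
      have hline : ContinuousAt (fun s : ℝ => x + s • h) s := by fun_prop
      exact (((continuousAt_iSup_apply fun j => (hfd j _ hy).continuousAt).comp_of_eq
        hline rfl).sub ((hfd i _ hy).continuousAt.comp_of_eq hline rfl)).continuousWithinAt)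
    (fun s hs => by
      have hy := hsegε s (Ioo_subset_Ico_self hs)
      exact (hasDerivWithinAt_Ioi_comp_add_smul (g := fun y => ⨆ j, f j y)
        (tendsto_slope_dir_posDirDeriv_iSup (h := h) fun j => hfd j _ hy)).sub
        (hasDerivWithinAt_Ioi_comp_add_smul (g := f i) ((hfd i _ hy).tendsto_slope_dir h)))
    (by simp [hi])
    (fun s _ => sub_nonneg.2 (le_iSup_apply_of_finite _ i))
  exact ⟨t, ⟨ht.1, ht.2.trans_le (min_le_left _ _)⟩, sub_nonneg.1 hderiv⟩

lemma frequently_secondDirQuot_le_iSup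
    (himax : ∀ j, f j x = ⨆ k, f k x → fderiv ℝ (f j) x h ≤ fderiv ℝ (f i) x h) :
    ∃ᶠ t in 𝓝[>] 0,
      secondDirQuot (f i) x h t ≤ secondDirQuot (fun y => ⨆ j, f j y) x h t := by
  have hxt : ∀ᶠ t : ℝ in 𝓝[>] 0, x + t • h ∈ U ∧ 0 < t :=
    ((eventually_add_smul_mem hU hx h).filter_mono nhdsWithin_le_nhds).and self_mem_nhdsWithin
  refine ((frequently_fderiv_le_posDirDeriv_iSup hU hfd hx (h := h) hi).and_eventually hxt).mono
    fun t ⟨hle, hxt, ht⟩ => ?_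
  rw [secondDirQuot, secondDirQuot, (hfd i _ hxt).posDirDeriv_eq, (hfd i x hx).posDirDeriv_eq,
    posDirDeriv_iSup_eq (fun k => hfd k x hx) hi himax]
  exact div_le_div_of_nonneg_right (sub_le_sub_right hle _) ht.le

end SecondOrder

theorem upperD2_max_ge_lowerD2_general {n m : ℕ}
    (U : Set (EuclideanSpace ℝ (Fin n))) (hU : IsOpen U)
    (f : Fin m → EuclideanSpace ℝ (Fin n) → ℝ)
    (hfd : ∀ i, ∀ x ∈ U, DifferentiableAt ℝ (f i) x)
    (hflip : ∀ i, ∃ K : ℝ≥0, LipschitzOnWith K (fun y => fderiv ℝ (f i) y) U)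
    (F : EuclideanSpace ℝ (Fin n) → ℝ)
    (hF : ∀ x, F x = ⨆ i, f i x)
    (x : EuclideanSpace ℝ (Fin n)) (hx : x ∈ U) (h : EuclideanSpace ℝ (Fin n))
    (i : Fin m) (hactive : f i x = F x)
    (hargmax : ∀ j, f j x = F x → fderiv ℝ (f j) x h ≤ fderiv ℝ (f i) x h) :
    lowerD2 (f i) x h ≤ upperD2 F x h := by
  obtain rfl : F = fun y => ⨆ j, f j y := funext hF
  choose K hK using hflip
  have hKmax (j : Fin m) : LipschitzOnWith (Finset.univ.sup K) (fderiv ℝ (f j)) U :=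
    (hK j).weaken (Finset.le_sup (Finset.mem_univ j))
  exact liminf_le_limsup_of_frequently_le
    (frequently_secondDirQuot_le_iSup hU hfd hx hactive hargmax)
    (isBoundedUnder_of_eventually_ge (eventually_neg_le_secondDirQuot hU (hfd i) (hKmax i) hx))
    (isBoundedUnder_of_eventually_le
      (eventually_secondDirQuot_iSup_le hU hfd hx hactive hKmax hargmax))

/-- Proposition 16: lower bound for generalized second-order derivatives of maximum
functions: `D̄²f(x,h²) ≥ D̲²fᵢ(x,h²)` for every index `i` in the argmax `M` of the
directional derivatives among the active indices. -/
theorem upperD2_max_ge_lowerD2 {n m : ℕ} (hm : 0 < m)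
    (U : Set (EuclideanSpace ℝ (Fin n))) (hU : IsOpen U) (hUconv : Convex ℝ U)
    (f : Fin m → EuclideanSpace ℝ (Fin n) → ℝ)
    (hfd : ∀ i, ∀ x ∈ U, DifferentiableAt ℝ (f i) x)
    (hflip : ∀ i, ∃ K : ℝ≥0, LipschitzOnWith K (fun y => fderiv ℝ (f i) y) U)
    (F : EuclideanSpace ℝ (Fin n) → ℝ)
    (hF : ∀ x, F x = ⨆ i, f i x)
    (x : EuclideanSpace ℝ (Fin n)) (hx : x ∈ U) (h : EuclideanSpace ℝ (Fin n))
    (i : Fin m) (hactive : f i x = F x)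
    (hargmax : ∀ j, f j x = F x → fderiv ℝ (f j) x h ≤ fderiv ℝ (f i) x h) :
    lowerD2 (f i) x h ≤ upperD2 F x h :=
  upperD2_max_ge_lowerD2_general U hU f hfd hflip F hF x hx h i hactive hargmax
end
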